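/- arXiv:2104.08966 — 9 statements merged into one kernel-verified Lean document; each statement's English description precedes it below -/
import Mathlib

section
/- For any n×n correlation matrix C with eigenvalues λ₁,...,λₙ, one has Σ_j (λ_j/n)² = g_n(c²+σ²), where c and σ are the mean and standard deviation of the off-diagonal entries and g_n(x) = ((n-1)x+1)/n. -/
/-!
With `V` the orthogonal matrix whose rows are the eigenvectors, the entries of `C Vᵀ` are
`λ_j v_j(i)`, so `Σ_j λ_j² = tr((C Vᵀ)(C Vᵀ)ᵀ) = tr(C Cᵀ) = Σ_{i,k} C_ik²`. For a symmetric matrix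
with unit diagonal this is `n + 2 Σ_{i>j} C_ij²`, and `c² + σ²` is the mean of the squared
off-diagonal entries, so dividing by `n²` gives `g_n(c² + σ²)`.
-/

open Finset Matrix

theorem Matrix.trace_mul_transpose_self {m n R : Type*} [Fintype m] [Fintype n] [CommSemiring R]
    (A : Matrix m n R) : (A * Aᵀ).trace = ∑ i, ∑ j, A i j ^ 2 := by
  simp [trace, mul_apply, sq]

theorem Finset.sum_sum_eq_two_mul_sum_lt_add_sum_diag {ι R : Type*} [Fintype ι] [LinearOrder ι]
    [NonAssocSemiring R] (f : ι → ι → R) (hf : ∀ i j, f i j = f j i) :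
    ∑ i, ∑ j, f i j = 2 * ∑ i, ∑ j ∈ univ.filter (· < i), f i j + ∑ i, f i i := by
  have hupper : ∑ i, ∑ j, (if i < j then f i j else 0) = ∑ i, ∑ j, if j < i then f i j else 0 := by
    rw [sum_comm]
    exact sum_congr rfl fun i _ => sum_congr rfl fun j _ => by rw [hf]
  calc ∑ i, ∑ j, f i j
      = ∑ i, ∑ j, ((if j < i then f i j else 0) + (if i < j then f i j else 0)
          + if i = j then f i j else 0) := by
        refine sum_congr rfl fun i _ => sum_congr rfl fun j _ => ?_
        rcases lt_trichotomy i j with h | rfl | h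
        · simp [h, h.ne, not_lt_of_gt h]
        · simp
        · simp [h, h.ne', not_lt_of_gt h]
    _ = 2 * ∑ i, ∑ j ∈ univ.filter (· < i), f i j + ∑ i, f i i := by
        simp only [sum_add_distrib, hupper, sum_ite_eq, mem_univ, if_true, sum_filter, two_mul]

theorem Matrix.sum_sq_eigenvalues_eq_sum_sq_entries {ι R : Type*} [Fintype ι] [DecidableEq ι]
    [CommRing R] (A : Matrix ι ι R) (lam : ι → R) (v : ι → ι → R)
    (heig : ∀ j, A *ᵥ v j = lam j • v j)
    (horth : ∀ j k, ∑ i, v j i * v k i = if j = k then 1 else 0) :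
    ∑ j, lam j ^ 2 = ∑ i, ∑ k, A i k ^ 2 := by
  set V : Matrix ι ι R := of v
  have hVtV : Vᵀ * V = 1 := mul_eq_one_comm.mp <| by
    ext j k
    simp [V, mul_apply, one_apply, horth]
  have hAVt : A * Vᵀ = of fun i j => lam j * v j i := by
    ext i j
    simpa [V, mul_apply, mulVec, dotProduct, mul_comm] using congrFun (heig j) i
  calc ∑ j, lam j ^ 2 = ∑ i, ∑ j, (lam j * v j i) ^ 2 := by
        rw [sum_comm]
        refine sum_congr rfl fun j _ => ?_
        simp only [mul_pow, ← mul_sum, sq (v j _), horth j j, if_true, mul_one]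
    _ = ((A * Vᵀ) * (A * Vᵀ)ᵀ).trace := by rw [trace_mul_transpose_self, hAVt]; rfl
    _ = (A * Aᵀ).trace := by
        rw [transpose_mul, transpose_transpose, mul_assoc, ← mul_assoc Vᵀ, hVtV, one_mul]
    _ = ∑ i, ∑ k, A i k ^ 2 := trace_mul_transpose_self A

/-- Characteristic identity: `Σ_j (λ_j/n)² = g_n(c²+σ²)` for a correlation matrix. -/
theorem stmt_2 (n : ℕ) (hn : 2 ≤ n) (C : Matrix (Fin n) (Fin n) ℝ)
    (hpsd : C.PosSemidef) (hdiag : ∀ i, C i i = 1)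
    (lam : Fin n → ℝ) (v : Fin n → (Fin n → ℝ))
    (heig : ∀ j, C.mulVec (v j) = lam j • v j)
    (horth : ∀ j k, ∑ i, v j i * v k i = if j = k then (1 : ℝ) else 0) :
    ∑ j : Fin n, (lam j / (n : ℝ)) ^ 2 =
      (((n : ℝ) - 1) *
          ((2 / ((n : ℝ) * ((n : ℝ) - 1))) *
            ∑ i : Fin n, ∑ j ∈ Finset.univ.filter (fun j => j < i), C i j ^ 2) + 1) / (n : ℝ) := by
  set S := ∑ i : Fin n, ∑ j ∈ Finset.univ.filter (fun j => j < i), C i j ^ 2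
  have hsum : ∑ j, lam j ^ 2 = 2 * S + n := by
    rw [sum_sq_eigenvalues_eq_sum_sq_entries C lam v heig horth,
      sum_sum_eq_two_mul_sum_lt_add_sum_diag (fun i j => C i j ^ 2)
        fun i j => by rw [← hpsd.isHermitian.apply i j]; rfl]
    simp [hdiag, S]
  have hn' : (2 : ℝ) ≤ n := by exact_mod_cast hn
  have hn1 : (n : ℝ) - 1 ≠ 0 := by linarith
  simp only [div_pow, ← sum_div, hsum]
  field_simp
end

section
/- For any n×n correlation matrix C (n ≥ 2), one has c² + σ² ≤ 1, where c is the mean and σ the standard deviation of the off-diagonal entries. -/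
open Finset

theorem Matrix.PosSemidef.apply_sq_le_mul_diag {ι : Type*} [Fintype ι]
    {A : Matrix ι ι ℝ} (hA : A.PosSemidef) (i j : ι) : A i j ^ 2 ≤ A i i * A j j := by
  classical
  have hminor := (hA.submatrix ![i, j]).det_nonneg
  have hsymm : A j i = A i j := hA.1.apply i j
  rw [Matrix.det_fin_two] at hminor
  simp only [Matrix.submatrix_apply, Matrix.cons_val_zero, Matrix.cons_val_one, hsymm] at hminor
  nlinarith

theorem Fin.two_mul_sum_card_filter_lt (n : ℕ) :
    2 * ∑ i : Fin n, (#{j | j < i} : ℝ) = n * (n - 1) := by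
  have hcard (i : Fin n) : #{j | j < i} = (i : ℕ) := by
    rw [filter_gt_eq_Iio, Fin.card_Iio]
  simp only [hcard]
  rw [Fin.sum_univ_eq_sum_range (fun k => (k : ℝ)), ← Nat.cast_sum]
  have gauss : ((∑ i ∈ range n, i : ℕ) : ℝ) * 2 = n * (n - 1 : ℕ) := by
    exact_mod_cast sum_range_id_mul_two n
  rcases n with _ | m
  · simp
  · push_cast at gauss ⊢
    linarith

/-- For an n×n correlation matrix, `c² + σ² = (2/(n(n-1)))·Σ_{i>j} C_{ij}² ≤ 1`. -/
theorem stmt_4 (n : ℕ) (hn : 2 ≤ n) (C : Matrix (Fin n) (Fin n) ℝ)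
    (hpsd : C.PosSemidef) (hdiag : ∀ i, C i i = 1) :
    (2 / ((n : ℝ) * ((n : ℝ) - 1))) *
        ∑ i : Fin n, ∑ j ∈ Finset.univ.filter (fun j => j < i), C i j ^ 2 ≤ 1 := by
  have hentry (i j : Fin n) : C i j ^ 2 ≤ 1 := by
    simpa [hdiag] using hpsd.apply_sq_le_mul_diag i j
  have hsum : ∑ i : Fin n, ∑ j ∈ Finset.univ.filter (fun j => j < i), C i j ^ 2
      ≤ ∑ i : Fin n, (#{j | j < i} : ℝ) :=
    sum_le_sum fun i _ => by simpa using sum_le_card_nsmul _ _ 1 fun j _ => hentry i j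
  have hpos : 0 < (n : ℝ) * ((n : ℝ) - 1) := by
    have : (2 : ℝ) ≤ n := by exact_mod_cast hn
    nlinarith
  rw [div_mul_eq_mul_div, div_le_one hpos]
  linarith [Fin.two_mul_sum_card_filter_lt n]
end

section
/- Let n ≥ 2, α ∈ [0,1], and p = (p₁,...,pₙ) ∈ ℝⁿ with p_j ∈ [0,1] for all j, Σ_j p_j = 1, and ‖p‖² ≥ α. Then max_j p_j ≥ s(α), where s(x) = (1+√(2x−1))/2 if x ≥ 1/2 and s(x) = x otherwise. -/
/-- Scaling function `s`. -/
noncomputable def sFun (x : ℝ) : ℝ := if 1 / 2 ≤ x then (1 + Real.sqrt (2 * x - 1)) / 2 else x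

/-- If `p_j ∈ [0,1]`, `Σ_j p_j = 1` and `‖p‖² ≥ α`, then `max_j p_j ≥ s(α)`. -/
theorem stmt_6 (n : ℕ) (hn : 2 ≤ n) (α : ℝ) (hα0 : 0 ≤ α) (hα1 : α ≤ 1)
    (p : Fin n → ℝ) (hp0 : ∀ j, 0 ≤ p j) (hp1 : ∀ j, p j ≤ 1)
    (hsum : ∑ j, p j = 1) (hnorm : α ≤ ∑ j, p j ^ 2) :
    sFun α ≤ Finset.univ.sup' (Finset.univ_nonempty_iff.mpr ⟨⟨0, by omega⟩⟩) p := by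
  set M := Finset.univ.sup' (Finset.univ_nonempty_iff.mpr ⟨⟨0, by omega⟩⟩) p with hMdef
  have hM : ∀ j, p j ≤ M := fun j => Finset.le_sup' p (Finset.mem_univ j)
  obtain ⟨k, -, hk⟩ := Finset.exists_mem_eq_sup' (Finset.univ_nonempty_iff.mpr ⟨⟨0, by omega⟩⟩) p
  -- first bound : α ≤ M
  have h1 : α ≤ M := by
    calc α ≤ ∑ j, p j ^ 2 := hnorm
    _ ≤ ∑ j, p j * M := by
      apply Finset.sum_le_sum
      intro j _
      have := hM j
      nlinarith [hp0 j]
    _ = M := by rw [← Finset.sum_mul, hsum, one_mul]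
  -- second bound : α ≤ M^2 + (1-M)^2
  have hrest : ∑ j ∈ Finset.univ.erase k, p j = 1 - p k := by
    have := Finset.sum_erase_add Finset.univ p (Finset.mem_univ k)
    linarith [this.symm ▸ hsum]
  have hrestnn : 0 ≤ ∑ j ∈ Finset.univ.erase k, p j :=
    Finset.sum_nonneg fun j _ => hp0 j
  have h2 : α ≤ M ^ 2 + (1 - M) ^ 2 := by
    have hsplit := Finset.sum_erase_add Finset.univ (fun j => p j ^ 2) (Finset.mem_univ k)
    have hkey : ∑ j ∈ Finset.univ.erase k, p j ^ 2 ≤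
        (∑ j ∈ Finset.univ.erase k, p j) ^ 2 := by
      calc ∑ j ∈ Finset.univ.erase k, p j ^ 2
          ≤ ∑ j ∈ Finset.univ.erase k, p j * (∑ i ∈ Finset.univ.erase k, p i) := by
            apply Finset.sum_le_sum
            intro j hj
            have hle : p j ≤ ∑ i ∈ Finset.univ.erase k, p i :=
              Finset.single_le_sum (fun i _ => hp0 i) hj
            nlinarith [hp0 j]
        _ = (∑ j ∈ Finset.univ.erase k, p j) ^ 2 := by rw [← Finset.sum_mul]; ring
    have hthis : ∑ j, p j ^ 2 ≤ (1 - p k) ^ 2 + p k ^ 2 := by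
      rw [← hsplit]
      have := hkey
      rw [hrest] at this
      linarith
    have hMk : M = p k := hk
    rw [← hMk] at hthis
    linarith [hnorm]
  -- conclude
  unfold sFun
  split_ifs with h
  · have hMhalf : (1:ℝ)/2 ≤ M := le_trans h h1
    have hsq : Real.sqrt (2 * α - 1) ≤ 2 * M - 1 := by
      rw [show 2 * M - 1 = Real.sqrt ((2 * M - 1) ^ 2) by
        rw [Real.sqrt_sq (by linarith)]]
      apply Real.sqrt_le_sqrt
      nlinarith [h2]
    linarith
  · exact h1
end

section
/- For any n×n correlation matrix C ≠ Id with characteristic (c,σ), the largest eigenvalue satisfies λ₁/n ≥ s(g_n(c²+σ²)), where s(x) = (1+√(2x−1))/2 for x ≥ 1/2 and s(x) = x otherwise, and g_n(x) = ((n-1)x+1)/n. -/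
open Finset Matrix

theorem Finset.sum_sum_eq_sum_add_two_mul_sum_lt {ι R : Type*} [Fintype ι] [LinearOrder ι]
    [Semiring R] {f : ι → ι → R} (hf : ∀ i j, f i j = f j i) :
    ∑ i, ∑ j, f i j = ∑ i, f i i + 2 * ∑ i, ∑ j ∈ univ.filter (· < i), f i j := by
  have hsplit : ∀ i, ∑ j, f i j =
      f i i + (∑ j ∈ univ.filter (· < i), f i j + ∑ j ∈ univ.filter (i < ·), f i j) := by
    intro i
    rw [sum_filter, sum_filter, ← sum_add_distrib, ← Fintype.sum_ite_eq' i (f i),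
      ← sum_add_distrib]
    refine sum_congr rfl fun j _ => ?_
    rcases lt_trichotomy j i with h | rfl | h
    · simp [h, h.ne, h.not_gt]
    · simp
    · simp [h, h.ne', h.not_gt]
  have hupper :
      ∑ i, ∑ j ∈ univ.filter (i < ·), f i j = ∑ i, ∑ j ∈ univ.filter (· < i), f i j := by
    simp only [sum_filter]
    rw [sum_comm]
    exact sum_congr rfl fun i _ => sum_congr rfl fun j _ => by rw [hf]
  rw [sum_congr rfl fun i _ => hsplit i, sum_add_distrib, sum_add_distrib, hupper, two_mul]

namespace Matrix

variable {ι R : Type*} [Fintype ι] [DecidableEq ι] [CommSemiring R]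

theorem eq_transpose_mul_diagonal_mul {A V : Matrix ι ι R} {d : ι → R} (hV : V * Vᵀ = 1)
    (hAV : A * Vᵀ = Vᵀ * diagonal d) : A = Vᵀ * diagonal d * V := by
  rw [← hAV, Matrix.mul_assoc, mul_eq_one_comm.mp hV, Matrix.mul_one]

theorem trace_transpose_mul_mul {V : Matrix ι ι R} (hV : V * Vᵀ = 1) (M : Matrix ι ι R) :
    trace (Vᵀ * M * V) = trace M := by
  rw [trace_mul_comm, ← Matrix.mul_assoc, hV, Matrix.one_mul]

theorem trace_eq_sum_of_mul_transpose_eq {A V : Matrix ι ι R} {d : ι → R} (hV : V * Vᵀ = 1)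
    (hAV : A * Vᵀ = Vᵀ * diagonal d) : trace A = ∑ i, d i := by
  rw [eq_transpose_mul_diagonal_mul hV hAV, trace_transpose_mul_mul hV, trace_diagonal]

theorem trace_mul_self_eq_sum_sq_of_mul_transpose_eq {A V : Matrix ι ι R} {d : ι → R}
    (hV : V * Vᵀ = 1) (hAV : A * Vᵀ = Vᵀ * diagonal d) : trace (A * A) = ∑ i, d i ^ 2 := by
  have hA := eq_transpose_mul_diagonal_mul hV hAV
  calc trace (A * A) = trace (Vᵀ * (diagonal d * diagonal d) * V) := by
        rw [hA]; simp only [Matrix.mul_assoc, ← Matrix.mul_assoc V, hV, Matrix.one_mul]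
    _ = ∑ i, d i ^ 2 := by
        rw [trace_transpose_mul_mul hV, diagonal_mul_diagonal, trace_diagonal]; simp only [sq]

theorem of_mul_transpose_of_orthonormal {v : ι → ι → R}
    (horth : ∀ j k, ∑ i, v j i * v k i = if j = k then 1 else 0) : of v * (of v)ᵀ = 1 := by
  ext j k
  simpa [Matrix.mul_apply, Matrix.one_apply] using horth j k

theorem mul_of_transpose_eq_of_mulVec_eq_smul {A : Matrix ι ι R} {v : ι → ι → R} {d : ι → R}
    (heig : ∀ j, A *ᵥ v j = d j • v j) : A * (of v)ᵀ = (of v)ᵀ * diagonal d := by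
  ext i j
  rw [mul_diagonal]
  simpa [Matrix.mul_apply, mulVec, dotProduct, mul_comm] using congrFun (heig j) i

end Matrix

theorem Matrix.trace_mul_self_eq_sum_add_two_mul_sum_lt {ι R : Type*} [Fintype ι]
    [LinearOrder ι] [CommSemiring R] {A : Matrix ι ι R} (hA : A.IsSymm) :
    trace (A * A) = ∑ i, A i i ^ 2 + 2 * ∑ i, ∑ j ∈ univ.filter (· < i), A i j ^ 2 := by
  rw [← sum_sum_eq_sum_add_two_mul_sum_lt (f := fun i j => A i j ^ 2)
    fun i j => by rw [hA.apply]]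
  simp only [trace, Matrix.diag, Matrix.mul_apply]
  exact sum_congr rfl fun i _ => sum_congr rfl fun j _ => by rw [hA.apply, sq]

theorem Matrix.PosSemidef.nonneg_of_mulVec_eq_smul {ι : Type*} [Fintype ι]
    {A : Matrix ι ι ℝ} (hA : A.PosSemidef) {v : ι → ℝ} {μ : ℝ} (hv : A *ᵥ v = μ • v)
    (hnorm : v ⬝ᵥ v = 1) : 0 ≤ μ := by
  simpa [hv, hnorm] using hA.dotProduct_mulVec_nonneg v

section EigenvalueBounds

variable {ι : Type*} [Fintype ι] {lam : ι → ℝ}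

theorem sum_sq_le_mul_sum_of_le (h0 : ∀ j, 0 ≤ lam j) {t : ℝ} (ht : ∀ j, lam j ≤ t) :
    ∑ j, lam j ^ 2 ≤ t * ∑ j, lam j := by
  rw [mul_sum]
  exact sum_le_sum fun j _ => by rw [sq]; exact mul_le_mul_of_nonneg_right (ht j) (h0 j)

theorem sum_sq_le_sq_add_sq_sum_sub [DecidableEq ι] (h0 : ∀ j, 0 ≤ lam j) (i : ι) :
    ∑ j, lam j ^ 2 ≤ lam i ^ 2 + (∑ j, lam j - lam i) ^ 2 := by
  rw [← add_sum_erase _ _ (mem_univ i), ← add_sum_erase _ lam (mem_univ i), add_sub_cancel_left]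
  exact add_le_add le_rfl (sum_sq_le_sq_sum_of_nonneg fun j _ => h0 j)

end EigenvalueBounds

theorem sFun_le_of_le_of_le_sq_add_sq {x p : ℝ} (hp : x ≤ p) (hsq : x ≤ p ^ 2 + (1 - p) ^ 2) :
    sFun x ≤ p := by
  unfold sFun
  split_ifs with hx
  · have h2p : 0 ≤ 2 * p - 1 := by linarith
    have : Real.sqrt (2 * x - 1) ≤ 2 * p - 1 :=
      Real.sqrt_le_iff.mpr ⟨h2p, by nlinarith⟩
    linarith
  · exact hp

theorem sFun_div_sq_le {Q N t : ℝ} (hN : 0 < N) (h1 : Q ≤ t * N) (h2 : Q ≤ t ^ 2 + (N - t) ^ 2) :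
    sFun (Q / N ^ 2) ≤ t / N := by
  apply sFun_le_of_le_of_le_sq_add_sq
  · rw [div_le_div_iff₀ (by positivity) hN]; nlinarith
  · rw [div_pow, one_sub_div hN.ne', div_pow, ← add_div]
    exact div_le_div_of_nonneg_right (by linarith) (by positivity)

theorem stmt_9_general (n : ℕ) (C : Matrix (Fin n) (Fin n) ℝ)
    (hpsd : C.PosSemidef) (hdiag : ∀ i, C i i = 1)
    (lam : Fin n → ℝ) (v : Fin n → (Fin n → ℝ))
    (heig : ∀ j, C.mulVec (v j) = lam j • v j)
    (horth : ∀ j k, ∑ i, v j i * v k i = if j = k then (1 : ℝ) else 0)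
    (i1 : Fin n) (hmax : ∀ j, lam j ≤ lam i1) :
    lam i1 / (n : ℝ) ≥
      sFun ((((n : ℝ) - 1) *
          ((2 / ((n : ℝ) * ((n : ℝ) - 1))) *
            ∑ i : Fin n, ∑ j ∈ Finset.univ.filter (fun j => j < i), C i j ^ 2) + 1) / (n : ℝ)) := by
  set F := ∑ i : Fin n, ∑ j ∈ Finset.univ.filter (fun j => j < i), C i j ^ 2
  have hn : (0 : ℝ) < n := Nat.cast_pos.mpr i1.pos
  have hV := of_mul_transpose_of_orthonormal horth
  have hCV := mul_of_transpose_eq_of_mulVec_eq_smul heig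
  have hsum : ∑ j, lam j = n := by
    rw [← trace_eq_sum_of_mul_transpose_eq hV hCV]; simp [trace, hdiag]
  have hsum_sq : ∑ j, lam j ^ 2 = n + 2 * F := by
    rw [← trace_mul_self_eq_sum_sq_of_mul_transpose_eq hV hCV,
      trace_mul_self_eq_sum_add_two_mul_sum_lt (isHermitian_iff_isSymm.mp hpsd.1)]
    simp [hdiag, F]
  have hnonneg : ∀ j, 0 ≤ lam j := fun j =>
    hpsd.nonneg_of_mulVec_eq_smul (heig j) (by simpa [dotProduct] using horth j j)
  have harg : (((n : ℝ) - 1) * ((2 / ((n : ℝ) * ((n : ℝ) - 1))) * F) + 1) / n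
      = (n + 2 * F) / (n : ℝ) ^ 2 := by
    rcases eq_or_ne (n : ℝ) 1 with h1 | h1
    -- for `n = 1` the factor `2 / (n * (n - 1))` is the junk value `0`, but the sum `F` is empty
    · obtain rfl : n = 1 := by exact_mod_cast h1
      simp [F]
    · have : (n : ℝ) - 1 ≠ 0 := sub_ne_zero.mpr h1
      field_simp
      ring
  rw [ge_iff_le, harg, ← hsum_sq]
  refine sFun_div_sq_le hn ?_ ?_
  · simpa [hsum] using sum_sq_le_mul_sum_of_le hnonneg hmax
  · simpa [hsum] using sum_sq_le_sq_add_sq_sum_sub hnonneg i1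

/-- For a correlation matrix `C ≠ Id`, one has `λ₁/n ≥ s(g_n(c²+σ²))`. -/
theorem stmt_9 (n : ℕ) (hn : 2 ≤ n) (C : Matrix (Fin n) (Fin n) ℝ)
    (hpsd : C.PosSemidef) (hdiag : ∀ i, C i i = 1) (hne : C ≠ 1)
    (lam : Fin n → ℝ) (v : Fin n → (Fin n → ℝ))
    (heig : ∀ j, C.mulVec (v j) = lam j • v j)
    (horth : ∀ j k, ∑ i, v j i * v k i = if j = k then (1 : ℝ) else 0)
    (i1 : Fin n) (hmax : ∀ j, lam j ≤ lam i1) :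
    lam i1 / (n : ℝ) ≥
      sFun ((((n : ℝ) - 1) *
          ((2 / ((n : ℝ) * ((n : ℝ) - 1))) *
            ∑ i : Fin n, ∑ j ∈ Finset.univ.filter (fun j => j < i), C i j ^ 2) + 1) / (n : ℝ)) :=
  stmt_9_general n C hpsd hdiag lam v heig horth i1 hmax
end

section
/- Let C be an n×n correlation matrix with mean correlation c, and suppose its largest eigenvalue λ₁ satisfies na ≤ λ₁ ≤ nb with a,b ≥ 0 and a+b > 1. Then the weight w₁ = ⟨v₁,δ_n⟩² of a normalized eigenvector v₁ for λ₁ satisfies w₁ ≥ (g_n(c)+a−1)/(b+a−1). -/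
/-! Expand `δ_n` in the eigenbasis: the weights `w_j = ⟨v_j, δ_n⟩²` sum to `1` and
`n g_n(c) = δ_nᵀ C δ_n = ∑ λ_j w_j`. The eigenvalues are nonnegative with sum `tr C = n`,
so every `λ_j` other than `λ₁` is at most `n - λ₁ ≤ n (1 - a)`. Hence
`g_n(c) ≤ b w₁ + (1 - a)(1 - w₁)`, which rearranges to the claim. -/

open Matrix Finset

lemma sum_sum_eq_sum_diag_add_two_mul_sum_lt {ι α : Type*} [Fintype ι] [LinearOrder ι]
    [NonAssocSemiring α] {f : ι → ι → α} (hf : ∀ i j, f j i = f i j) :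
    ∑ i, ∑ j, f i j = ∑ i, f i i + 2 * ∑ i, ∑ j ∈ univ.filter (· < i), f i j := by
  have hsplit : ∀ i j, f i j = (if i = j then f i j else 0) + (if j < i then f i j else 0)
      + (if i < j then f j i else 0) := by
    intro i j
    rcases lt_trichotomy i j with h | rfl | h
    · simp [h, h.ne, h.not_gt, hf i j]
    · simp
    · simp [h, h.ne', h.not_gt]
  have hupper : ∑ i, ∑ j, (if i < j then f j i else 0)
      = ∑ i, ∑ j, (if j < i then f i j else 0) := sum_comm
  rw [sum_congr rfl fun i _ => sum_congr rfl fun j _ => hsplit i j]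
  simp only [sum_add_distrib]
  rw [hupper]
  simp only [sum_ite_eq, mem_univ, if_true, ← sum_filter]
  rw [two_mul, add_assoc]

section Weights

variable {ι : Type*} [Fintype ι] [DecidableEq ι] {lam w : ι → ℝ}

lemma sum_mul_le_mul_add_sub_mul_one_sub (hlam : ∀ j, 0 ≤ lam j) (hw : ∀ j, 0 ≤ w j)
    (hw_sum : ∑ j, w j = 1) (i : ι) :
    ∑ j, lam j * w j ≤ lam i * w i + (∑ j, lam j - lam i) * (1 - w i) := by
  have hlam_le : ∀ j ∈ univ.erase i, lam j ≤ ∑ j, lam j - lam i := fun j hj => by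
    rw [← sum_erase_add univ lam (mem_univ i), add_sub_cancel_right]
    exact single_le_sum (fun k _ => hlam k) hj
  have hw_erase : ∑ j ∈ univ.erase i, w j = 1 - w i := by
    rw [← hw_sum, ← sum_erase_add univ w (mem_univ i), add_sub_cancel_right]
  calc ∑ j, lam j * w j = lam i * w i + ∑ j ∈ univ.erase i, lam j * w j := by
        rw [← add_sum_erase univ _ (mem_univ i)]
    _ ≤ lam i * w i + ∑ j ∈ univ.erase i, (∑ j, lam j - lam i) * w j := by
        gcongr with j hj
        · exact hw j
        · exact hlam_le j hj
    _ = lam i * w i + (∑ j, lam j - lam i) * (1 - w i) := by rw [← mul_sum, hw_erase]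

lemma le_weight_of_bounds {N a b : ℝ} (hlam : ∀ j, 0 ≤ lam j) (hlam_sum : ∑ j, lam j = N)
    (hw : ∀ j, 0 ≤ w j) (hw_sum : ∑ j, w j = 1) (i : ι) (hN : 0 < N) (hab : 1 < a + b)
    (hla : N * a ≤ lam i) (hlb : lam i ≤ N * b) :
    ((∑ j, lam j * w j) / N + a - 1) / (b + a - 1) ≤ w i := by
  have hbound := sum_mul_le_mul_add_sub_mul_one_sub hlam hw hw_sum i
  rw [hlam_sum] at hbound
  have hw_le : w i ≤ 1 := hw_sum ▸ single_le_sum (fun j _ => hw j) (mem_univ i)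
  have hmean_le : (∑ j, lam j * w j) / N ≤ b * w i + (1 - a) * (1 - w i) := by
    rw [div_le_iff₀ hN]
    nlinarith [mul_nonneg (sub_nonneg.2 hlb) (hw i),
      mul_nonneg (sub_nonneg.2 hla) (sub_nonneg.2 hw_le)]
  rw [div_le_iff₀ (by linarith)]
  linarith

end Weights

namespace Matrix

variable {ι : Type*} [Fintype ι]

lemma PosSemidef.eigenvalue_nonneg {C : Matrix ι ι ℝ} (hC : C.PosSemidef) {x : ι → ℝ}
    {μ : ℝ} (hx : C *ᵥ x = μ • x) (hx0 : x ≠ 0) : 0 ≤ μ := by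
  have h := hC.dotProduct_mulVec_nonneg x
  rw [hx, dotProduct_smul, smul_eq_mul] at h
  exact nonneg_of_mul_nonneg_left h (dotProduct_star_self_pos_iff.mpr hx0)

lemma const_dotProduct_mulVec_const (C : Matrix ι ι ℝ) (t : ℝ) :
    (fun _ => t) ⬝ᵥ C *ᵥ (fun _ => t) = t ^ 2 * ∑ i, ∑ j, C i j := by
  simp only [dotProduct, mulVec, mul_sum]
  exact sum_congr rfl fun i _ => sum_congr rfl fun j _ => by ring

variable [DecidableEq ι] {v : ι → ι → ℝ}

lemma of_mul_transpose_eq_one_of_orthonormal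
    (horth : ∀ j k, ∑ i, v j i * v k i = if j = k then (1 : ℝ) else 0) :
    of v * (of v)ᵀ = 1 := by
  ext j k
  simpa [mul_apply, one_apply] using horth j k

variable {C : Matrix ι ι ℝ} {lam : ι → ℝ}

lemma eq_transpose_mul_diagonal_mul_of_eigenbasis (hv : of v * (of v)ᵀ = 1)
    (heig : ∀ j, C *ᵥ v j = lam j • v j) : C = (of v)ᵀ * diagonal lam * of v := by
  have hCV : C * (of v)ᵀ = (of v)ᵀ * diagonal lam := by
    ext i j
    simpa [mul_apply, diagonal_apply, mulVec, dotProduct, mul_comm] using congrFun (heig j) i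
  calc C = C * ((of v)ᵀ * of v) := by rw [mul_eq_one_comm.mp hv, Matrix.mul_one]
    _ = (of v)ᵀ * diagonal lam * of v := by rw [← Matrix.mul_assoc, hCV]

lemma trace_eq_sum_of_eigenbasis (hv : of v * (of v)ᵀ = 1)
    (heig : ∀ j, C *ᵥ v j = lam j • v j) : C.trace = ∑ j, lam j := by
  rw [eq_transpose_mul_diagonal_mul_of_eigenbasis hv heig, trace_mul_comm, ← Matrix.mul_assoc,
    hv, Matrix.one_mul, trace_diagonal]

lemma dotProduct_mulVec_eq_sum_of_eigenbasis (hv : of v * (of v)ᵀ = 1)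
    (heig : ∀ j, C *ᵥ v j = lam j • v j) (x : ι → ℝ) :
    x ⬝ᵥ C *ᵥ x = ∑ j, lam j * (v j ⬝ᵥ x) ^ 2 := by
  rw [eq_transpose_mul_diagonal_mul_of_eigenbasis hv heig, ← mulVec_mulVec, ← mulVec_mulVec,
    dotProduct_mulVec, vecMul_transpose]
  simp only [dotProduct, mulVec_diagonal]
  simp only [mulVec, of_apply, dotProduct]
  exact sum_congr rfl fun j _ => by ring

lemma sum_sq_dotProduct_of_orthonormal (hv : of v * (of v)ᵀ = 1) (x : ι → ℝ) :
    ∑ j, (v j ⬝ᵥ x) ^ 2 = x ⬝ᵥ x := by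
  simpa using (dotProduct_mulVec_eq_sum_of_eigenbasis (C := 1) (lam := 1) hv (by simp) x).symm

end Matrix

namespace CorrelationMatrix

variable {n : ℕ}

/-- The paper's `δ_n`. -/
noncomputable def unitOnes (n : ℕ) : Fin n → ℝ := fun _ => (√n)⁻¹

/-- The paper's `c`. -/
noncomputable def meanOffDiag (C : Matrix (Fin n) (Fin n) ℝ) : ℝ :=
  2 / (n * (n - 1)) * ∑ i, ∑ j ∈ univ.filter (· < i), C i j

/-- The paper's `g_n`. -/
noncomputable def g (n : ℕ) (x : ℝ) : ℝ := ((n - 1) * x + 1) / n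

lemma unitOnes_dotProduct_self (hn : n ≠ 0) : unitOnes n ⬝ᵥ unitOnes n = 1 := by
  simp [unitOnes, dotProduct, ← sq, inv_pow, Real.sq_sqrt, hn]

lemma unitOnes_dotProduct_mulVec (hn : 2 ≤ n) {C : Matrix (Fin n) (Fin n) ℝ} (hC : C.IsSymm)
    (hdiag : ∀ i, C i i = 1) : unitOnes n ⬝ᵥ C *ᵥ unitOnes n = n * g n (meanOffDiag C) := by
  have hn1 : (1 : ℝ) < n := by exact_mod_cast hn
  have hsum := sum_sum_eq_sum_diag_add_two_mul_sum_lt (f := fun i j => C i j) (hC.apply · ·)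
  simp only [hdiag, sum_const, card_univ, Fintype.card_fin, nsmul_eq_mul, mul_one] at hsum
  unfold unitOnes
  rw [const_dotProduct_mulVec_const, inv_pow, Real.sq_sqrt n.cast_nonneg, hsum, g,
    meanOffDiag]
  have : (n : ℝ) - 1 ≠ 0 := by linarith
  field_simp
  ring

end CorrelationMatrix

open CorrelationMatrix in
theorem stmt_11_general (n : ℕ) (hn : 2 ≤ n) (C : Matrix (Fin n) (Fin n) ℝ)
    (hpsd : C.PosSemidef) (hdiag : ∀ i, C i i = 1)
    (lam : Fin n → ℝ) (v : Fin n → (Fin n → ℝ))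
    (heig : ∀ j, C.mulVec (v j) = lam j • v j)
    (horth : ∀ j k, ∑ i, v j i * v k i = if j = k then (1 : ℝ) else 0)
    (i1 : Fin n)
    (a b : ℝ) (hab : 1 < a + b)
    (hla : (n : ℝ) * a ≤ lam i1) (hlb : lam i1 ≤ (n : ℝ) * b) :
    (∑ i, v i1 i * (Real.sqrt n)⁻¹) ^ 2 ≥
      ((((n : ℝ) - 1) *
          ((2 / ((n : ℝ) * ((n : ℝ) - 1))) *
            ∑ i : Fin n, ∑ j ∈ Finset.univ.filter (fun j => j < i), C i j) + 1) / (n : ℝ)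
        + a - 1) / (b + a - 1) := by
  have hn0 : n ≠ 0 := by omega
  have hv := of_mul_transpose_eq_one_of_orthonormal horth
  have hlam : ∀ j, 0 ≤ lam j := fun j => hpsd.eigenvalue_nonneg (heig j) fun h0 => by
    simpa [h0] using horth j j
  have htrace : ∑ j, lam j = n := by
    simp [← trace_eq_sum_of_eigenbasis hv heig, trace, hdiag]
  have hw_sum : ∑ j, (v j ⬝ᵥ unitOnes n) ^ 2 = 1 := by
    rw [sum_sq_dotProduct_of_orthonormal hv, unitOnes_dotProduct_self hn0]
  have hweight := le_weight_of_bounds hlam htrace (fun _ => sq_nonneg _) hw_sum i1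
    (by positivity) hab hla hlb
  rwa [← dotProduct_mulVec_eq_sum_of_eigenbasis hv heig,
    unitOnes_dotProduct_mulVec hn (isHermitian_iff_isSymm.mp hpsd.1) hdiag,
    mul_div_cancel_left₀ _ (by positivity)] at hweight

/-- If `na ≤ λ₁ ≤ nb` with `a,b ≥ 0`, `a+b > 1`, then `w₁ ≥ (g_n(c)+a−1)/(b+a−1)`. -/
theorem stmt_11 (n : ℕ) (hn : 2 ≤ n) (C : Matrix (Fin n) (Fin n) ℝ)
    (hpsd : C.PosSemidef) (hdiag : ∀ i, C i i = 1)
    (lam : Fin n → ℝ) (v : Fin n → (Fin n → ℝ))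
    (heig : ∀ j, C.mulVec (v j) = lam j • v j)
    (horth : ∀ j k, ∑ i, v j i * v k i = if j = k then (1 : ℝ) else 0)
    (i1 : Fin n) (hmax : ∀ j, lam j ≤ lam i1)
    (a b : ℝ) (ha : 0 ≤ a) (hb : 0 ≤ b) (hab : 1 < a + b)
    (hla : (n : ℝ) * a ≤ lam i1) (hlb : lam i1 ≤ (n : ℝ) * b) :
    (∑ i, v i1 i * (Real.sqrt n)⁻¹) ^ 2 ≥
      ((((n : ℝ) - 1) *
          ((2 / ((n : ℝ) * ((n : ℝ) - 1))) *
            ∑ i : Fin n, ∑ j ∈ Finset.univ.filter (fun j => j < i), C i j) + 1) / (n : ℝ)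
        + a - 1) / (b + a - 1) :=
  stmt_11_general n hn C hpsd hdiag lam v heig horth i1 a b hab hla hlb
end

section
/- Let C be an n×n correlation matrix with mean correlation c > 0 and standard deviation σ. Then the weight w₁ = ⟨v₁,δ_n⟩² of a unit eigenvector v₁ for the largest eigenvalue satisfies w₁ ≥ 1 − ((n−1)/n)·(σ²/c²). -/
/-!
Write `C = E + D`, where `E = (1 - c) I + c 𝟙𝟙ᵀ` is the equicorrelation matrix with the same mean
correlation; `D` has zero diagonal, off-diagonal entries `C i j - c`, and hence Frobenius norm
`‖D‖² = n(n-1)σ²`. From `C v₁ = λ₁ v₁` we get `D v₁ = (λ₁ - 1 + c) v₁ - c ⟨v₁, 𝟙⟩ 𝟙`, so the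
component of `D v₁` orthogonal to `𝟙` is `λ₁ - 1 + c` times that of `v₁`, whose squared norm is
`1 - w₁`. The Rayleigh quotient at `𝟙` gives `λ₁ ≥ 1 + (n - 1) c`, hence
`n²c² (1 - w₁) ≤ ‖D v₁‖² ≤ ‖D‖² = n(n-1)σ²`.
-/

open Finset Matrix

theorem sum_sum_eq_sum_diag_add_two_nsmul_sum_filter_lt {ι M : Type*} [Fintype ι] [LinearOrder ι]
    [AddCommMonoid M] (f : ι → ι → M) (hf : ∀ i j, f i j = f j i) :
    ∑ i, ∑ j, f i j = ∑ i, f i i + 2 • ∑ i, ∑ j ∈ univ.filter (· < i), f i j := by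
  set g : ι → ι → M := fun i j => if j < i then f i j else 0
  have hsplit : ∀ i j, f i j = g i j + g j i + if i = j then f i j else 0 := by
    intro i j
    rcases lt_trichotomy i j with h | rfl | h
    · simp [g, h, h.ne, not_lt_of_gt h, hf i j]
    · simp [g]
    · simp [g, h, h.ne', not_lt_of_gt h]
  rw [sum_congr rfl fun i _ => sum_congr rfl fun j _ => hsplit i j]
  simp only [sum_add_distrib, sum_ite_eq, mem_univ, if_true]
  rw [sum_comm (f := fun i j => g j i), two_nsmul]
  simp only [g, sum_filter]
  abel

theorem sum_sq_mulVec_le {m n : Type*} [Fintype m] [Fintype n] (M : Matrix m n ℝ) (v : n → ℝ) :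
    ∑ i, (M *ᵥ v) i ^ 2 ≤ (∑ i, ∑ j, M i j ^ 2) * ∑ j, v j ^ 2 := by
  rw [sum_mul]
  exact sum_le_sum fun i _ => sum_mul_sq_le_sq_mul_sq univ (M i) v

theorem card_mul_sum_sq_sub_sq_sum_le {ι : Type*} [Fintype ι] (w : ι → ℝ) (b : ℝ) :
    (Fintype.card ι : ℝ) * ∑ i, w i ^ 2 - (∑ i, w i) ^ 2 ≤
      Fintype.card ι * ∑ i, (w i - b) ^ 2 := by
  have h : ∑ i, (w i - b) ^ 2 = ∑ i, w i ^ 2 - 2 * b * ∑ i, w i + Fintype.card ι * b ^ 2 := by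
    simp only [sub_sq, sum_add_distrib, sum_sub_distrib, sum_const, card_univ, nsmul_eq_mul,
      ← sum_mul, ← mul_sum]
    ring
  rw [h]
  nlinarith [sq_nonneg (∑ i, w i - Fintype.card ι * b)]

open scoped MatrixOrder in
theorem Matrix.IsHermitian.dotProduct_mulVec_le_of_forall_eigenvalue_le {ι : Type*} [Fintype ι]
    {A : Matrix ι ι ℝ} (hA : A.IsHermitian) {r : ℝ}
    (hr : ∀ (μ : ℝ) (x : ι → ℝ), x ≠ 0 → A *ᵥ x = μ • x → μ ≤ r) (x : ι → ℝ) :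
    x ⬝ᵥ A *ᵥ x ≤ r * (x ⬝ᵥ x) := by
  classical
  have hle : A ≤ algebraMap ℝ (Matrix ι ι ℝ) r := by
    refine le_algebraMap_of_spectrum_le (fun μ hμ => ?_) hA
    rw [hA.spectrum_real_eq_range_eigenvalues] at hμ
    obtain ⟨i, rfl⟩ := hμ
    exact hr _ _ (by simpa using hA.eigenvectorBasis.orthonormal.ne_zero i)
      (hA.mulVec_eigenvectorBasis i)
  have h := (Matrix.le_iff.mp hle).dotProduct_mulVec_nonneg x
  rw [Algebra.algebraMap_eq_smul_one, sub_mulVec, dotProduct_sub, smul_mulVec, one_mulVec,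
    dotProduct_smul, smul_eq_mul, star_trivial] at h
  linarith

section Equicorrelation

variable {ι : Type*} [DecidableEq ι]

def equicorrelation (c : ℝ) : Matrix ι ι ℝ := (1 - c) • 1 + c • of fun _ _ => 1

theorem equicorrelation_apply (c : ℝ) (i j : ι) :
    equicorrelation c i j = if i = j then 1 else c := by
  by_cases h : i = j <;> simp [equicorrelation, h]

variable [Fintype ι]

/-- `(card ι * ∑ i, v i ^ 2 - (∑ i, v i) ^ 2) / card ι` is the squared norm of the component of
`v` orthogonal to the all-ones vector. -/
theorem sq_sub_mul_card_mul_sum_sq_sub_sq_sum_le {A : Matrix ι ι ℝ} {μ : ℝ} {v : ι → ℝ}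
    (hv : A *ᵥ v = μ • v) (c : ℝ) :
    (μ - (1 - c)) ^ 2 * ((Fintype.card ι : ℝ) * ∑ i, v i ^ 2 - (∑ i, v i) ^ 2) ≤
      Fintype.card ι * ((∑ i, ∑ j, (A i j - equicorrelation c i j) ^ 2) * ∑ i, v i ^ 2) := by
  have hres : ∀ i, ((A - equicorrelation c) *ᵥ v) i = (μ - (1 - c)) * v i - c * ∑ j, v j := by
    intro i
    rw [sub_mulVec, hv, equicorrelation, add_mulVec, smul_mulVec, smul_mulVec, one_mulVec]
    simp only [Pi.sub_apply, Pi.add_apply, Pi.smul_apply, smul_eq_mul, mulVec, dotProduct,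
      of_apply, one_mul]
    ring
  calc (μ - (1 - c)) ^ 2 * ((Fintype.card ι : ℝ) * ∑ i, v i ^ 2 - (∑ i, v i) ^ 2)
      = (Fintype.card ι : ℝ) * ∑ i, ((μ - (1 - c)) * v i) ^ 2 -
          (∑ i, (μ - (1 - c)) * v i) ^ 2 := by
        simp only [mul_pow, ← mul_sum]
        ring
    _ ≤ (Fintype.card ι : ℝ) * ∑ i, ((μ - (1 - c)) * v i - c * ∑ j, v j) ^ 2 :=
        card_mul_sum_sq_sub_sq_sum_le _ _
    _ ≤ _ := by
        have h := sum_sq_mulVec_le (A - equicorrelation c) v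
        simp only [Matrix.sub_apply, hres] at h
        gcongr

end Equicorrelation

section Correlation

variable {n : ℕ} {C : Matrix (Fin n) (Fin n) ℝ}

theorem two_mul_sum_filter_lt_eq_of_eq (hn : 2 ≤ n) (f : Fin n → Fin n → ℝ) {m : ℝ}
    (hm : m = 2 / ((n : ℝ) * ((n : ℝ) - 1)) * ∑ i, ∑ j ∈ univ.filter (· < i), f i j) :
    2 * ∑ i, ∑ j ∈ univ.filter (· < i), f i j = n * (n - 1) * m := by
  have : (n : ℝ) - 1 ≠ 0 := by
    have : (2 : ℝ) ≤ n := by exact_mod_cast hn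
    linarith
  rw [hm]
  field_simp

theorem two_mul_sum_sum_filter_lt_one :
    2 * ∑ i : Fin n, ∑ _ ∈ univ.filter (· < i), (1 : ℝ) = n * (n - 1) := by
  have h := sum_sum_eq_sum_diag_add_two_nsmul_sum_filter_lt (fun (_ _ : Fin n) => (1 : ℝ))
    fun _ _ => rfl
  simp only [sum_const, card_univ, Fintype.card_fin, nsmul_eq_mul, mul_one] at h ⊢
  linear_combination -h

theorem sum_sum_eq_card_add_of_unit_diag (hn : 2 ≤ n) (hsym : ∀ i j, C i j = C j i)
    (hdiag : ∀ i, C i i = 1) {c : ℝ}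
    (hc : c = (2 / ((n : ℝ) * ((n : ℝ) - 1))) *
        ∑ i : Fin n, ∑ j ∈ Finset.univ.filter (fun j => j < i), C i j) :
    ∑ i, ∑ j, C i j = n + n * (n - 1) * c := by
  rw [sum_sum_eq_sum_diag_add_two_nsmul_sum_filter_lt C hsym, nsmul_eq_mul, Nat.cast_ofNat,
    two_mul_sum_filter_lt_eq_of_eq hn C hc]
  simp [hdiag]

theorem sum_sum_sq_sub_equicorrelation (hn : 2 ≤ n) (hsym : ∀ i j, C i j = C j i)
    (hdiag : ∀ i, C i i = 1) {c σ : ℝ}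
    (hc : c = (2 / ((n : ℝ) * ((n : ℝ) - 1))) *
        ∑ i : Fin n, ∑ j ∈ Finset.univ.filter (fun j => j < i), C i j)
    (hσ : σ ^ 2 = (2 / ((n : ℝ) * ((n : ℝ) - 1))) *
        (∑ i : Fin n, ∑ j ∈ Finset.univ.filter (fun j => j < i), C i j ^ 2) - c ^ 2) :
    ∑ i, ∑ j, (C i j - equicorrelation c i j) ^ 2 = n * (n - 1) * σ ^ 2 := by
  have hlin := two_mul_sum_filter_lt_eq_of_eq hn C hc
  have hquad := two_mul_sum_filter_lt_eq_of_eq hn (fun i j => C i j ^ 2) (m := σ ^ 2 + c ^ 2)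
    (by linear_combination hσ)
  have hoff : ∑ i, ∑ j ∈ univ.filter (· < i), (C i j - equicorrelation c i j) ^ 2 =
      ∑ i, ∑ j ∈ univ.filter (· < i), C i j ^ 2 - 2 * c * ∑ i, ∑ j ∈ univ.filter (· < i), C i j +
        c ^ 2 * ∑ i : Fin n, ∑ _ ∈ univ.filter (· < i), (1 : ℝ) := by
    simp only [mul_sum, ← sum_sub_distrib, ← sum_add_distrib]
    refine sum_congr rfl fun i _ => sum_congr rfl fun j hj => ?_
    rw [equicorrelation_apply, if_neg (mem_filter.mp hj).2.ne']
    ring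
  rw [sum_sum_eq_sum_diag_add_two_nsmul_sum_filter_lt _ fun i j => by
    simp only [equicorrelation_apply, hsym i j, eq_comm], hoff]
  simp only [hdiag, equicorrelation_apply, if_true, sub_self, zero_pow two_ne_zero,
    sum_const_zero, zero_add, nsmul_eq_mul]
  linear_combination hquad - 2 * c * hlin + c ^ 2 * two_mul_sum_sum_filter_lt_one

theorem one_add_mul_le_of_forall_eigenvalue_le (hn : 2 ≤ n) (hC : C.IsHermitian)
    (hdiag : ∀ i, C i i = 1) {c : ℝ}
    (hc : c = (2 / ((n : ℝ) * ((n : ℝ) - 1))) *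
        ∑ i : Fin n, ∑ j ∈ Finset.univ.filter (fun j => j < i), C i j)
    {r : ℝ} (hr : ∀ (μ : ℝ) (x : Fin n → ℝ), x ≠ 0 → C *ᵥ x = μ • x → μ ≤ r) :
    1 + (n - 1) * c ≤ r := by
  have h := hC.dotProduct_mulVec_le_of_forall_eigenvalue_le hr 1
  rw [one_dotProduct_one, Fintype.card_fin, one_dotProduct] at h
  simp only [mulVec, dotProduct, Pi.one_apply, mul_one] at h
  rw [sum_sum_eq_card_add_of_unit_diag hn (fun i j => by simpa using hC.apply j i) hdiag hc] at h
  have hpos : (0 : ℝ) < n := by positivity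
  have hmul : (n : ℝ) * (1 + (n - 1) * c) ≤ n * r := by linarith
  exact le_of_mul_le_mul_left hmul hpos

end Correlation

/-- For a correlation matrix with `c > 0`, `w₁ ≥ 1 − ((n−1)/n)·(σ²/c²)`. -/
theorem stmt_13 (n : ℕ) (hn : 2 ≤ n) (C : Matrix (Fin n) (Fin n) ℝ)
    (hpsd : C.PosSemidef) (hdiag : ∀ i, C i i = 1)
    (c σ : ℝ)
    (hc : c = (2 / ((n : ℝ) * ((n : ℝ) - 1))) *
        ∑ i : Fin n, ∑ j ∈ Finset.univ.filter (fun j => j < i), C i j)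
    (hσ : σ ^ 2 = (2 / ((n : ℝ) * ((n : ℝ) - 1))) *
        (∑ i : Fin n, ∑ j ∈ Finset.univ.filter (fun j => j < i), C i j ^ 2) - c ^ 2)
    (hcpos : 0 < c)
    (lam1 : ℝ) (v1 : Fin n → ℝ)
    (hv1 : C.mulVec v1 = lam1 • v1) (hv1norm : ∑ i, v1 i ^ 2 = 1)
    (hmax : ∀ (μ : ℝ) (x : Fin n → ℝ), x ≠ 0 → C.mulVec x = μ • x → μ ≤ lam1) :
    (∑ i, v1 i * (Real.sqrt n)⁻¹) ^ 2 ≥ 1 - (((n : ℝ) - 1) / n) * (σ ^ 2 / c ^ 2) := by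
  have hsym : ∀ i j, C i j = C j i := fun i j => by simpa using hpsd.isHermitian.apply j i
  have htop := one_add_mul_le_of_forall_eigenvalue_le hn hpsd.isHermitian hdiag hc hmax
  have hperp := sq_sub_mul_card_mul_sum_sq_sub_sq_sum_le hv1 c
  rw [sum_sum_sq_sub_equicorrelation hn hsym hdiag hc hσ, hv1norm, Fintype.card_fin] at hperp
  set s := ∑ i, v1 i
  have hs : s ^ 2 ≤ n := by simpa [hv1norm] using sq_sum_le_card_mul_sum_sq (s := univ) (f := v1)
  have hdev : c ^ 2 * (n - s ^ 2) ≤ (n - 1) * σ ^ 2 := by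
    refine le_of_mul_le_mul_left ?_ (by positivity : (0 : ℝ) < n ^ 2)
    have : (n * c) ^ 2 * (n - s ^ 2) ≤ (lam1 - (1 - c)) ^ 2 * (n - s ^ 2) := by
      gcongr
      linarith
    linarith
  have hw : (∑ i, v1 i * (Real.sqrt n)⁻¹) ^ 2 = s ^ 2 / n := by
    rw [← sum_mul, mul_pow, inv_pow, Real.sq_sqrt (by positivity), div_eq_mul_inv]
  have hdiff : s ^ 2 / n - (1 - (n - 1) / n * (σ ^ 2 / c ^ 2)) =
      ((n - 1) * σ ^ 2 - c ^ 2 * (n - s ^ 2)) / (n * c ^ 2) := by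
    field_simp
    ring
  rw [hw, ge_iff_le, ← sub_nonneg, hdiff]
  exact div_nonneg (by linarith) (by positivity)
end

section
/- If n ≥ 2, c > 0, and 0 ≤ σ ≤ c/2^{1/4}, then s(g_n(c²/(c²+σ²))) > ((n−1)/n)·(σ²/c²), where s(x) = (1+√(2x−1))/2 for x ≥ 1/2 and s(x) = x otherwise, and g_n(x) = ((n-1)x+1)/n. -/
set_option maxHeartbeats 1000000 in
/-- If `c > 0` and `σ ≤ c/2^{1/4}` then `s(g_n(c²/(c²+σ²))) > ((n−1)/n)·(σ²/c²)`. -/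
theorem stmt_16 (n : ℕ) (hn : 2 ≤ n) (c σ : ℝ) (hc : 0 < c) (hσ0 : 0 ≤ σ)
    (hσ : σ ≤ c / (2 : ℝ) ^ ((1 : ℝ) / 4)) :
    sFun ((((n : ℝ) - 1) * (c ^ 2 / (c ^ 2 + σ ^ 2)) + 1) / (n : ℝ)) >
      (((n : ℝ) - 1) / n) * (σ ^ 2 / c ^ 2) := by
  have hN : (2:ℝ) ≤ (n:ℝ) := by exact_mod_cast hn
  set N : ℝ := (n : ℝ)
  have hN0 : (0:ℝ) < N := by linarith
  have hS : (0:ℝ) < c ^ 2 := by positivity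
  have hT : (0:ℝ) ≤ σ ^ 2 := sq_nonneg σ
  have hP : (0:ℝ) < c ^ 2 + σ ^ 2 := by linarith
  -- key: 2 σ^4 ≤ c^4
  have h2 : ((2:ℝ) ^ ((1:ℝ)/4))^2 = Real.sqrt 2 := by
    rw [Real.sqrt_eq_rpow, ← Real.rpow_natCast ((2:ℝ)^((1:ℝ)/4)) 2,
      ← Real.rpow_mul (by norm_num)]
    norm_num
  have hq : σ^2 ≤ c^2 / Real.sqrt 2 := by
    have := pow_le_pow_left₀ hσ0 hσ 2
    rwa [div_pow, h2] at this
  have hs2 : Real.sqrt 2 ^ 2 = 2 := Real.sq_sqrt (by norm_num)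
  have hkey : 2 * σ^4 ≤ c^4 := by
    have h3 : (σ^2)^2 ≤ (c^2 / Real.sqrt 2)^2 := pow_le_pow_left₀ hT hq 2
    rw [div_pow, hs2] at h3
    nlinarith [h3]
  have hTS : σ^2 ≤ c^2 := by nlinarith
  have hh : (1:ℝ)/2 ≤ c^2/(c^2+σ^2) := by
    rw [le_div_iff₀ hP]; nlinarith
  -- the argument is ≥ 1/2
  have hg : (1:ℝ)/2 ≤ ((N - 1) * (c ^ 2 / (c ^ 2 + σ ^ 2)) + 1) / N := by
    rw [le_div_iff₀ hN0]
    nlinarith [mul_le_mul_of_nonneg_left hh (by linarith : (0:ℝ) ≤ N - 1)]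
  rw [sFun, if_pos hg]
  set r : ℝ := ((N - 1) / N) * (σ ^ 2 / c ^ 2) with hr
  have hsq : Real.sqrt (2 * (((N - 1) * (c ^ 2 / (c ^ 2 + σ ^ 2)) + 1) / N) - 1)
      > 2 * r - 1 := by
    rcases lt_or_ge (2 * r - 1) 0 with h | h
    · exact lt_of_lt_of_le h (Real.sqrt_nonneg _)
    · refine (Real.lt_sqrt h).mpr ?_
      have hcase : N * c^2 ≤ 2 * ((N-1) * σ^2) := by
        have h1 : (1:ℝ)/2 ≤ ((N-1) * σ^2) / (N * c^2) := by
          rw [← div_mul_div_comm]; rw [hr] at h; linarith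
        rw [div_le_div_iff₀ (by norm_num) (by positivity)] at h1; linarith
      have hTpos : (0:ℝ) < σ^2 := by nlinarith
      have hG : (0:ℝ) < N * c^2 * c^2 + 2 * c^2 * σ^2 - 2 * (N-1) * (σ^2 * σ^2) := by
        nlinarith [mul_le_mul_of_nonneg_left hkey (by linarith : (0:ℝ) ≤ N - 1)]
      have hprod : (0:ℝ) < (2 * (N-1) * σ^2) *
          (N * c^2 * c^2 + 2 * c^2 * σ^2 - 2 * (N-1) * (σ^2 * σ^2)) :=
        mul_pos (by nlinarith) hG
      rw [hr]
      have hc2 : c ^ 2 ≠ 0 := hS.ne'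
      have hP' : (c ^ 2 + σ ^ 2) ≠ 0 := hP.ne'
      have hN' : N ≠ 0 := hN0.ne'
      rw [div_mul_div_comm]
      have hL : (2 * ((N - 1) * σ ^ 2 / (N * c ^ 2)) - 1) ^ 2
          = (2 * ((N - 1) * σ ^ 2) - N * c ^ 2) ^ 2 / (N * c ^ 2) ^ 2 := by
        field_simp
      have hX : 2 * (((N - 1) * (c ^ 2 / (c ^ 2 + σ ^ 2)) + 1) / N) - 1
          = (N * c^2 - (N - 2) * σ^2) / (N * (c^2 + σ^2)) := by
        field_simp; ring
      rw [hL, hX, div_lt_div_iff₀ (by positivity) (by positivity)]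
      nlinarith [hprod]
  linarith
end

section
/- An n×n correlation matrix C has c² + σ² = 1 if and only if C = x·xᵀ for some vector x ∈ ℝⁿ with all entries ±1. In particular, such C has largest eigenvalue n and all other eigenvalues 0. -/
/-!
The quadratic form of `C` at `eᵢ - C i j • eⱼ` is `1 - C i j ^ 2`, so `C i j ^ 2 ≤ 1` and the mean
of the squared off-diagonal entries is `1` exactly when every entry is `±1`. Then the form vanishes
at that vector, which therefore lies in the kernel of `C`; reading off coordinates gives
`C k i = C i j * C k j`, so `C = x xᵀ` with `x k = C k i₀`. The rank-one matrix `x xᵀ` maps every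
vector into the span of `x`, whence its only eigenvalues are `xᵀx = n` and `0`.
-/

open Matrix Finset

lemma Finset.sum_sum_eq_sum_sum_iff_of_le {ι κ M : Type*} [AddCommMonoid M] [PartialOrder M]
    [IsOrderedCancelAddMonoid M] {s : Finset ι} {t : ι → Finset κ} {f g : ι → κ → M}
    (h : ∀ i ∈ s, ∀ j ∈ t i, f i j ≤ g i j) :
    ∑ i ∈ s, ∑ j ∈ t i, f i j = ∑ i ∈ s, ∑ j ∈ t i, g i j ↔
      ∀ i ∈ s, ∀ j ∈ t i, f i j = g i j := by
  rw [sum_eq_sum_iff_of_le fun i hi => sum_le_sum (h i hi)]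
  exact forall₂_congr fun i hi => sum_eq_sum_iff_of_le (h i hi)

lemma Fin.sum_univ_val_cast (n : ℕ) : ∑ i : Fin n, (i : ℝ) = n * (n - 1) / 2 := by
  induction n with
  | zero => simp
  | succ n ih =>
    rw [Fin.sum_univ_castSucc]
    simp only [Fin.val_castSucc, ih, Fin.val_last]
    push_cast
    ring

lemma Fin.sum_sum_filter_lt_one (n : ℕ) :
    ∑ i : Fin n, ∑ _j ∈ univ.filter (fun j => j < i), (1 : ℝ) = n * (n - 1) / 2 := by
  simp [Finset.filter_gt_eq_Iio, Fin.sum_univ_val_cast]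

namespace Matrix

section RankOne

variable {ι K : Type*} [Fintype ι] [Field K]

lemma vecMulVec_mulVec_self (u v : ι → K) : vecMulVec u v *ᵥ u = (v ⬝ᵥ u) • u := by
  rw [vecMulVec_mulVec, op_smul_eq_smul]

lemma eq_dotProduct_or_eq_zero_of_vecMulVec_mulVec_eq_smul {u v y : ι → K} {μ : K} (hy : y ≠ 0)
    (h : vecMulVec u v *ᵥ y = μ • y) : μ = v ⬝ᵥ u ∨ μ = 0 := by
  rw [vecMulVec_mulVec, op_smul_eq_smul] at h
  by_cases hvy : v ⬝ᵥ y = 0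
  · rw [hvy, zero_smul, eq_comm, smul_eq_zero] at h
    exact .inr (h.resolve_right hy)
  · have : (v ⬝ᵥ y) * (v ⬝ᵥ u) = μ * (v ⬝ᵥ y) := by
      simpa only [dotProduct_smul, smul_eq_mul] using congrArg (v ⬝ᵥ ·) h
    exact .inl (mul_right_cancel₀ hvy (by rw [← this, mul_comm]))

end RankOne

lemma dotProduct_self_eq_card_of_sign {ι : Type*} [Fintype ι] {x : ι → ℝ}
    (hx : ∀ i, x i = 1 ∨ x i = -1) : x ⬝ᵥ x = Fintype.card ι := by
  simp [dotProduct, fun i => mul_self_eq_one_iff.mpr (hx i)]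

namespace PosSemidef

variable {ι : Type*} [Fintype ι] [DecidableEq ι] {C : Matrix ι ι ℝ}

lemma dotProduct_mulVec_single_sub_smul_single (hC : C.PosSemidef) {i j : ι}
    (hi : C i i = 1) (hj : C j j = 1) :
    (Pi.single i 1 - C i j • Pi.single j 1) ⬝ᵥ
      C *ᵥ (Pi.single i 1 - C i j • Pi.single j 1) = 1 - C i j ^ 2 := by
  have hji : C j i = C i j := by simpa using hC.isHermitian.apply i j
  simp only [mulVec_sub, mulVec_smul, mulVec_single_one, sub_dotProduct, dotProduct_sub,
    smul_dotProduct, dotProduct_smul, single_one_dotProduct, col_apply, smul_eq_mul,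
    hi, hj, hji]
  ring

lemma sq_apply_le_one (hC : C.PosSemidef) {i j : ι} (hi : C i i = 1) (hj : C j j = 1) :
    C i j ^ 2 ≤ 1 := by
  have := hC.dotProduct_mulVec_nonneg (Pi.single i 1 - C i j • Pi.single j 1)
  rw [star_trivial, hC.dotProduct_mulVec_single_sub_smul_single hi hj] at this
  linarith

lemma apply_eq_mul_of_sq_apply_eq_one (hC : C.PosSemidef) {i j : ι} (hi : C i i = 1)
    (hj : C j j = 1) (hij : C i j ^ 2 = 1) (k : ι) : C k i = C i j * C k j := by
  have hker := (hC.dotProduct_mulVec_zero_iff (Pi.single i 1 - C i j • Pi.single j 1)).mp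
    (by rw [star_trivial, hC.dotProduct_mulVec_single_sub_smul_single hi hj, hij, sub_self])
  have := congrFun hker k
  simp only [mulVec_sub, mulVec_smul, mulVec_single_one, Pi.sub_apply, Pi.smul_apply, col_apply,
    smul_eq_mul, Pi.zero_apply] at this
  linarith

lemma eq_vecMulVec_of_sq_apply_eq_one (hC : C.PosSemidef) (hdiag : ∀ i, C i i = 1)
    (hsq : ∀ i j, C i j ^ 2 = 1) (i₀ : ι) :
    C = vecMulVec (fun k => C k i₀) (fun k => C k i₀) := by
  ext k i
  rw [vecMulVec_apply, hC.apply_eq_mul_of_sq_apply_eq_one (hdiag i) (hdiag i₀) (hsq i i₀) k,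
    mul_comm]

end PosSemidef

/-- The paper's `c² + σ²`: the mean of the squared off-diagonal entries, each unordered pair
counted once through its entry below the diagonal. -/
noncomputable def meanSqOffDiag {n : ℕ} (C : Matrix (Fin n) (Fin n) ℝ) : ℝ :=
  2 / ((n : ℝ) * ((n : ℝ) - 1)) * ∑ i : Fin n, ∑ j ∈ univ.filter (fun j => j < i), C i j ^ 2

namespace PosSemidef

lemma forall_sq_apply_eq_one_iff {ι : Type*} [Fintype ι] [DecidableEq ι] [Nonempty ι]
    {C : Matrix ι ι ℝ} (hC : C.PosSemidef) (hdiag : ∀ i, C i i = 1) :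
    (∀ i j, C i j ^ 2 = 1) ↔ ∃ x : ι → ℝ, (∀ i, x i = 1 ∨ x i = -1) ∧ C = vecMulVec x x := by
  constructor
  · intro hsq
    obtain ⟨i₀⟩ := ‹Nonempty ι›
    exact ⟨fun k => C k i₀, fun k => sq_eq_one_iff.mp (hsq k i₀),
      hC.eq_vecMulVec_of_sq_apply_eq_one hdiag hsq i₀⟩
  · rintro ⟨x, hx, rfl⟩ i j
    rw [vecMulVec_apply, mul_pow, sq_eq_one_iff.mpr (hx i), sq_eq_one_iff.mpr (hx j), one_mul]

lemma meanSqOffDiag_eq_one_iff {n : ℕ} (hn : 2 ≤ n) {C : Matrix (Fin n) (Fin n) ℝ}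
    (hC : C.PosSemidef) (hdiag : ∀ i, C i i = 1) :
    C.meanSqOffDiag = 1 ↔ ∀ i j, C i j ^ 2 = 1 := by
  have hN : (n : ℝ) * ((n : ℝ) - 1) ≠ 0 := by
    have : (2 : ℝ) ≤ n := by exact_mod_cast hn
    exact mul_ne_zero (by positivity) (by linarith)
  have hsymm : ∀ i j, C j i = C i j := fun i j => by simpa using hC.isHermitian.apply i j
  calc C.meanSqOffDiag = 1
      ↔ ∑ i : Fin n, ∑ j ∈ univ.filter (fun j => j < i), C i j ^ 2
        = ∑ i : Fin n, ∑ _j ∈ univ.filter (fun j => j < i), (1 : ℝ) := by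
        rw [meanSqOffDiag, Fin.sum_sum_filter_lt_one, div_mul_eq_mul_div, div_eq_one_iff_eq hN]
        constructor <;> intro h <;> linarith
    _ ↔ ∀ i ∈ univ, ∀ j ∈ univ.filter (fun j => j < i), C i j ^ 2 = 1 :=
        sum_sum_eq_sum_sum_iff_of_le fun i _ j _ => hC.sq_apply_le_one (hdiag i) (hdiag j)
    _ ↔ ∀ i j, C i j ^ 2 = 1 := by
        refine ⟨fun h i j => ?_, fun h i _ j _ => h i j⟩
        rcases lt_trichotomy j i with hji | rfl | hij
        · exact h i (mem_univ i) j (by simpa using hji)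
        · rw [hdiag, one_pow]
        · rw [← hsymm]; exact h j (mem_univ j) i (by simpa using hij)

end PosSemidef

end Matrix

/-- An n×n correlation matrix has `c²+σ² = 1` iff `C = x·xᵀ` with `x_i = ±1`;
in that case the spectrum is `{n, 0}` and `n` is attained. -/
theorem stmt_17 (n : ℕ) (hn : 2 ≤ n) (C : Matrix (Fin n) (Fin n) ℝ)
    (hpsd : C.PosSemidef) (hdiag : ∀ i, C i i = 1) :
    ((2 / ((n : ℝ) * ((n : ℝ) - 1))) *
        ∑ i : Fin n, ∑ j ∈ Finset.univ.filter (fun j => j < i), C i j ^ 2 = 1 ↔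
      ∃ x : Fin n → ℝ, (∀ i, x i = 1 ∨ x i = -1) ∧ C = Matrix.of fun i j => x i * x j) ∧
    ((2 / ((n : ℝ) * ((n : ℝ) - 1))) *
        ∑ i : Fin n, ∑ j ∈ Finset.univ.filter (fun j => j < i), C i j ^ 2 = 1 →
      (∃ y : Fin n → ℝ, y ≠ 0 ∧ C.mulVec y = (n : ℝ) • y) ∧
      ∀ (μ : ℝ) (y : Fin n → ℝ), y ≠ 0 → C.mulVec y = μ • y → μ = (n : ℝ) ∨ μ = 0) := by
  have : Nonempty (Fin n) := ⟨⟨0, by omega⟩⟩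
  have hrankOne : C.meanSqOffDiag = 1 ↔
      ∃ x : Fin n → ℝ, (∀ i, x i = 1 ∨ x i = -1) ∧ C = vecMulVec x x :=
    (hpsd.meanSqOffDiag_eq_one_iff hn hdiag).trans (hpsd.forall_sq_apply_eq_one_iff hdiag)
  refine ⟨hrankOne, fun h => ?_⟩
  obtain ⟨x, hx, rfl⟩ := hrankOne.mp h
  have hxx : x ⬝ᵥ x = n := by rw [dotProduct_self_eq_card_of_sign hx, Fintype.card_fin]
  have hx0 : x ≠ 0 := fun h0 => by simpa [h0] using hx ⟨0, by omega⟩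
  refine ⟨⟨x, hx0, by rw [vecMulVec_mulVec_self, hxx]⟩, fun μ y hy hμ => ?_⟩
  rw [← hxx]
  exact eq_dotProduct_or_eq_zero_of_vecMulVec_mulVec_eq_smul hy hμ
end

section
/- Let x, x̃ ∈ ℝⁿ be unit vectors, w := ⟨x,δ_n⟩² and w̃ := ⟨x̃,δ_n⟩² with δ_n = (1,...,1)/√n. Then 1 − ⟨x,x̃⟩² ≥ (3/4)·(√w − √w̃)². -/
set_option maxHeartbeats 1000000

lemma key_nonneg (a b c : ℝ) (ha0 : 0 ≤ a) (hb0 : 0 ≤ b) (hc0 : 0 ≤ c)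
    (ha : a ≤ 1) (hb : b ≤ 1)
    (h : (c - a*b)^2 ≤ (1-a^2)*(1-b^2)) :
    (a - b)^2 ≤ 1 - c^2 := by
  set p := Real.sqrt (1 - a^2) with hpdef
  set q := Real.sqrt (1 - b^2) with hqdef
  have hp0 : 0 ≤ p := Real.sqrt_nonneg _
  have hq0 : 0 ≤ q := Real.sqrt_nonneg _
  have hp : p^2 = 1 - a^2 := Real.sq_sqrt (by nlinarith)
  have hq : q^2 = 1 - b^2 := Real.sq_sqrt (by nlinarith)
  have hp1 : p ≤ 1 := by nlinarith
  have hq1 : q ≤ 1 := by nlinarith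
  have hcq : c ≤ a*b + p*q := by nlinarith [sq_nonneg (c - a*b - p*q), sq_nonneg (c - a*b + p*q), mul_nonneg hp0 hq0]
  have h1 : (a*q - b*p)*(a*q + b*p) = (a-b)*(a+b) := by linear_combination a^2*hq - b^2*hp
  have h2 : a*q + b*p ≤ a + b := by nlinarith
  have hS : 0 ≤ a*q + b*p := by positivity
  have hD2 : (a-b)^2 ≤ (a*q - b*p)^2 := by
    rcases eq_or_lt_of_le hS with hS0 | hSp
    · have haq : a*q = 0 := by nlinarith [mul_nonneg ha0 hq0, mul_nonneg hb0 hp0]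
      have hbp : b*p = 0 := by nlinarith [mul_nonneg ha0 hq0, mul_nonneg hb0 hp0]
      have hab : (a-b)*(a+b) = 0 := by rw [← h1, haq, hbp]; ring
      rcases mul_eq_zero.mp hab with h' | h'
      · nlinarith [sq_nonneg (a*q - b*p)]
      · have ha' : a = 0 := by linarith
        have hb' : b = 0 := by linarith
        have : (a-b)^2 = 0 := by rw [ha', hb']; ring
        rw [this]; positivity
    · have hsq : (a*q - b*p)^2*(a*q+b*p)^2 = ((a-b)*(a+b))^2 := by
        rw [← h1]; ring
      have hfac : 0 ≤ (a-b)^2*((a+b)^2 - (a*q+b*p)^2) :=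
        mul_nonneg (sq_nonneg _) (by nlinarith)
      nlinarith [hsq, hfac, mul_pos hSp hSp, sq_nonneg (a-b)]
  have hid : 1 - (a*b + p*q)^2 = (a*q - b*p)^2 := by linear_combination (-(q^2+b^2))*hp - hq
  nlinarith [mul_nonneg (mul_nonneg ha0 hb0) (mul_nonneg hp0 hq0)]

lemma key_abs (a b c : ℝ) (ha : a^2 ≤ 1) (hb : b^2 ≤ 1)
    (h : (c - a*b)^2 ≤ (1-a^2)*(1-b^2)) :
    1 - c^2 ≥ (3/4) * (Real.sqrt (a^2) - Real.sqrt (b^2))^2 := by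
  rw [Real.sqrt_sq_eq_abs, Real.sqrt_sq_eq_abs]
  have h' : (|c| - |a| * |b|)^2 ≤ (1-|a|^2)*(1-|b|^2) := by
    have h1 : abs (|c| - |a*b|) ≤ |c - a*b| := abs_abs_sub_abs_le_abs_sub c (a*b)
    have h2 : (|c| - |a| * |b|)^2 ≤ (c - a*b)^2 := by
      rw [← abs_mul]
      calc (|c| - |a*b|)^2 = (abs (|c| - |a*b|))^2 := (sq_abs _).symm
        _ ≤ |c - a*b|^2 := pow_le_pow_left₀ (abs_nonneg _) h1 2
        _ = (c - a*b)^2 := sq_abs _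
    calc (|c| - |a| * |b|)^2 ≤ (c - a*b)^2 := h2
      _ ≤ (1-a^2)*(1-b^2) := h
      _ = (1-|a|^2)*(1-|b|^2) := by rw [sq_abs, sq_abs]
  have := key_nonneg |a| |b| |c| (abs_nonneg a) (abs_nonneg b) (abs_nonneg c)
    (abs_le_one_iff_mul_self_le_one.mpr (by nlinarith [sq_abs a]))
    (abs_le_one_iff_mul_self_le_one.mpr (by nlinarith [sq_abs b])) h'
  nlinarith [sq_abs c, sq_nonneg (|a| - |b|)]



/-- For unit vectors `x, x̃`, `1 − ⟨x,x̃⟩² ≥ (3/4)(√w − √w̃)²` with diagonal weights `w, w̃`. -/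
theorem stmt_18 (n : ℕ) (hn : 0 < n) (x xt : Fin n → ℝ)
    (hx : ∑ i, x i ^ 2 = 1) (hxt : ∑ i, xt i ^ 2 = 1) :
    1 - (∑ i, x i * xt i) ^ 2 ≥
      (3 / 4) * (Real.sqrt ((∑ i, x i * (Real.sqrt n)⁻¹) ^ 2) -
        Real.sqrt ((∑ i, xt i * (Real.sqrt n)⁻¹) ^ 2)) ^ 2 := by
  set d : ℝ := (Real.sqrt n)⁻¹ with hd
  set a : ℝ := ∑ i, x i * d with hadef
  set b : ℝ := ∑ i, xt i * d with hbdef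
  set c : ℝ := ∑ i, x i * xt i with hcdef
  have hdn : d^2 = (n:ℝ)⁻¹ := by
    rw [hd, inv_pow, Real.sq_sqrt (Nat.cast_nonneg n)]
  have hn0 : (n:ℝ) ≠ 0 := Nat.cast_ne_zero.mpr hn.ne'
  have hd1 : ∑ _i : Fin n, d^2 = 1 := by
    rw [Finset.sum_const, Finset.card_univ, Fintype.card_fin, nsmul_eq_mul, hdn,
      mul_inv_cancel₀ hn0]
  -- Cauchy–Schwarz for a and b
  have hcs1 : a^2 ≤ 1 := by
    have := Finset.sum_mul_sq_le_sq_mul_sq Finset.univ x (fun _ => d)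
    rw [hx, one_mul] at this
    calc a^2 ≤ ∑ i : Fin n, d^2 := this
      _ = 1 := hd1
  have hcs2 : b^2 ≤ 1 := by
    have := Finset.sum_mul_sq_le_sq_mul_sq Finset.univ xt (fun _ => d)
    rw [hxt, one_mul] at this
    calc b^2 ≤ ∑ i : Fin n, d^2 := this
      _ = 1 := hd1
  -- sums of squares of residuals
  have hu2 : ∑ i, (x i - a*d)^2 = 1 - a^2 := by
    have e : ∀ i ∈ Finset.univ, (x i - a*d)^2
        = x i^2 - 2*a*(x i * d) + a^2*d^2 := fun i _ => by ring
    rw [Finset.sum_congr rfl e, Finset.sum_add_distrib, Finset.sum_sub_distrib,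
      ← Finset.mul_sum, ← Finset.mul_sum, hx, ← hadef, hd1]
    ring
  have hv2 : ∑ i, (xt i - b*d)^2 = 1 - b^2 := by
    have e : ∀ i ∈ Finset.univ, (xt i - b*d)^2
        = xt i^2 - 2*b*(xt i * d) + b^2*d^2 := fun i _ => by ring
    rw [Finset.sum_congr rfl e, Finset.sum_add_distrib, Finset.sum_sub_distrib,
      ← Finset.mul_sum, ← Finset.mul_sum, hxt, ← hbdef, hd1]
    ring
  have huv : ∑ i, (x i - a*d)*(xt i - b*d) = c - a*b := by
    have e : ∀ i ∈ Finset.univ, (x i - a*d)*(xt i - b*d)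
        = x i * xt i - b*(x i * d) - a*(xt i * d) + (a*b)*d^2 := fun i _ => by ring
    rw [Finset.sum_congr rfl e, Finset.sum_add_distrib, Finset.sum_sub_distrib,
      Finset.sum_sub_distrib, ← Finset.mul_sum, ← Finset.mul_sum, ← Finset.mul_sum,
      ← hcdef, ← hadef, ← hbdef, hd1]
    ring
  have hcs3 : (c - a*b)^2 ≤ (1-a^2)*(1-b^2) := by
    have := Finset.sum_mul_sq_le_sq_mul_sq Finset.univ
      (fun i => x i - a*d) (fun i => xt i - b*d)
    simpa [huv, hu2, hv2] using this
  exact key_abs a b c hcs1 hcs2 hcs3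
end
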